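/- Let R be a weakly ΔU-ring. Then: (1) 3 is a unit of R if and only if 4 ∈ Δ(R); (2) 2 is a unit of R if and only if 3 ∈ Δ(R); and moreover, if 3 ∈ Δ(R), then the only idempotents of R are 0 and 1. -/
import Mathlib


/-- `Δ(R) = {r ∈ R : r + u is a unit for every unit u}`. -/
def Delta (R : Type*) [Ring R] : Set R :=
  {r : R | ∀ u : R, IsUnit u → IsUnit (r + u)}

/-- `R` is a weakly ΔU-ring: every unit is `1 + d` or `-1 + d` with `d ∈ Δ(R)`. -/
def IsWDU (R : Type*) [Ring R] : Prop :=
  ∀ u : R, IsUnit u → ∃ d ∈ Delta R, u = 1 + d ∨ u = -1 + d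

/-- `R` is a ΔU-ring: every unit is `1 + d` with `d ∈ Δ(R)`. -/
def IsDU (R : Type*) [Ring R] : Prop :=
  ∀ u : R, IsUnit u → ∃ d ∈ Delta R, u = 1 + d

lemma delta_add {R : Type*} [Ring R] {a b : R} (ha : a ∈ Delta R) (hb : b ∈ Delta R) :
    a + b ∈ Delta R := fun u hu => by
  rw [add_assoc]; exact ha _ (hb u hu)

lemma delta_neg {R : Type*} [Ring R] {a : R} (ha : a ∈ Delta R) : -a ∈ Delta R := fun u hu => by
  have h1 : IsUnit (a + -u) := ha _ hu.neg
  have h2 : -a + u = -(a + -u) := by abel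
  rw [h2]; exact h1.neg

lemma delta_mul_unit {R : Type*} [Ring R] {d u : R} (hd : d ∈ Delta R) (hu : IsUnit u) :
    d * u ∈ Delta R := by
  obtain ⟨U, rfl⟩ := hu
  intro v hv
  have h1 : IsUnit (d + v * ↑U⁻¹) := hd _ (hv.mul U⁻¹.isUnit)
  have h2 : d * ↑U + v = (d + v * ↑U⁻¹) * ↑U := by
    rw [add_mul, mul_assoc, U.inv_mul, mul_one]
  rw [h2]; exact h1.mul U.isUnit

lemma delta_sub_one_unit {R : Type*} [Ring R] {a : R} (ha : a ∈ Delta R) :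
    IsUnit (a + -1) := ha _ isUnit_one.neg

/-- In a weakly ΔU-ring: `3` is a unit iff `4 ∈ Δ(R)`; `2` is a unit iff
`3 ∈ Δ(R)`; and if `3 ∈ Δ(R)` then the only idempotents are `0` and `1`. -/
theorem stmt_10 (R : Type*) [Ring R] (h : IsWDU R) :
    (IsUnit (3 : R) ↔ (4 : R) ∈ Delta R) ∧
    (IsUnit (2 : R) ↔ (3 : R) ∈ Delta R) ∧
    ((3 : R) ∈ Delta R → ∀ e : R, IsIdempotentElem e → e = 0 ∨ e = 1) := by
  have idem : (3 : R) ∈ Delta R → ∀ e : R, IsIdempotentElem e → e = 0 ∨ e = 1 := by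
    intro h3 e he
    have h2u : IsUnit (2 : R) := by
      have := delta_sub_one_unit h3
      have e2 : (3 : R) + -1 = 2 := by norm_num
      rwa [e2] at this
    obtain ⟨U2, hU2⟩ := h2u
    have hesq : e * e = e := he
    have huu : (1 - 2 * e) * (1 - 2 * e) = 1 := by
      have step : (1 - 2 * e) * (1 - 2 * e) = 1 - 4 * e + 4 * (e * e) := by noncomm_ring
      rw [step, hesq]; noncomm_ring
    have hu : IsUnit (1 - 2 * e) := ⟨⟨_, _, huu, huu⟩, rfl⟩
    obtain ⟨d, hd, hcase | hcase⟩ := h _ hu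
    · -- 1 - 2e = 1 + d, so d = -(2e), 2e ∈ Δ, e ∈ Δ, e = 0
      have hde : d = -(2 * e) := by
        have h' : (1 : R) + -(2 * e) = 1 + d := by rw [← hcase]; noncomm_ring
        exact (add_left_cancel h').symm
      have h2e : (2 : R) * e ∈ Delta R := by
        have := delta_neg hd; rwa [hde, neg_neg] at this
      have heD : e ∈ Delta R := by
        have := delta_mul_unit h2e U2⁻¹.isUnit
        have heq : (2 : R) * e * ↑U2⁻¹ = e := by
          rw [show (2 : R) * e = e * 2 from by noncomm_ring, ← hU2, mul_assoc, U2.mul_inv,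
            mul_one]
        rwa [heq] at this
      left
      have hue : IsUnit (e + -1) := delta_sub_one_unit heD
      have hz : (e + -1) * e = (e + -1) * 0 := by
        have step : (e + -1) * e = e * e - e := by noncomm_ring
        rw [step, hesq, mul_zero, sub_self]
      exact hue.mul_left_cancel hz
    · -- 1 - 2e = -1 + d, so d = 2*(1-e)
      have hde : d = 2 * (1 - e) := by
        have h' : (-1 : R) + 2 * (1 - e) = -1 + d := by rw [← hcase]; noncomm_ring
        exact (add_left_cancel h').symm
      have h2e : (2 : R) * (1 - e) ∈ Delta R := hde ▸ hd
      have heD : (1 - e) ∈ Delta R := by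
        have := delta_mul_unit h2e U2⁻¹.isUnit
        have heq : (2 : R) * (1 - e) * ↑U2⁻¹ = 1 - e := by
          rw [show (2 : R) * (1 - e) = (1 - e) * 2 from by noncomm_ring, ← hU2, mul_assoc,
            U2.mul_inv, mul_one]
        rwa [heq] at this
      right
      have hue : IsUnit ((1 - e) + -1) := delta_sub_one_unit heD
      have hz : ((1 - e) + -1) * (1 - e) = ((1 - e) + -1) * 0 := by
        have step : ((1 - e) + -1) * (1 - e) = e * e - e := by noncomm_ring
        rw [step, hesq, mul_zero, sub_self]
      have hz2 := hue.mul_left_cancel hz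
      exact (eq_of_sub_eq_zero hz2).symm
  refine ⟨⟨?_, ?_⟩, ⟨?_, ?_⟩, idem⟩
  · intro h3
    obtain ⟨d, hd, hcase | hcase⟩ := h _ h3
    · have hd2 : d = 2 := by
        have h' : (1 : R) + 2 = 1 + d := by rw [← hcase]; norm_num
        exact (add_left_cancel h').symm
      subst hd2
      have := delta_add hd hd
      have e4 : (2 : R) + 2 = 4 := by norm_num
      rwa [e4] at this
    · have hd4 : d = 4 := by
        have h' : (-1 : R) + 4 = -1 + d := by rw [← hcase]; norm_num
        exact (add_left_cancel h').symm
      rwa [hd4] at hd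
  · intro h4
    have := delta_sub_one_unit h4
    have e3 : (4 : R) + -1 = 3 := by norm_num
    rwa [e3] at this
  · intro h2
    obtain ⟨d, hd, hcase | hcase⟩ := h _ h2
    · have hd1 : d = 1 := by
        have h' : (1 : R) + 1 = 1 + d := by rw [← hcase]; norm_num
        exact (add_left_cancel h').symm
      subst hd1
      have := delta_add hd (delta_add hd hd)
      have e3 : (1 : R) + (1 + 1) = 3 := by norm_num
      rwa [e3] at this
    · have hd3 : d = 3 := by
        have h' : (-1 : R) + 3 = -1 + d := by rw [← hcase]; norm_num
        exact (add_left_cancel h').symm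
      rwa [hd3] at hd
  · intro h3
    have := delta_sub_one_unit h3
    have e2 : (3 : R) + -1 = 2 := by norm_num
    rwa [e2] at this
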